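/- Let b > 0, σ > 0, let ν be a measure on (0,∞) with ∫_0^∞ (z∧1) ν(dz) < ∞, and fix t > 0. Define Δ_t(u) := ∫_0^t ∫_0^∞ (e^{zψ(s,u)} − 1) ν(dz) ds for real u ≤ −1. Then Δ_t is differentiable at every u ≤ −1 with derivative Δ_t'(u) = ∫_0^t ∫_0^∞ [z e^{−bs} / (1 − (σ²u/(2b))(1 − e^{−bs}))²] · exp( z u e^{−bs} / (1 − (σ²u/(2b))(1 − e^{−bs})) ) ν(dz) ds, and Δ_t'(u) → 0 as u → −∞. -/

import Mathlib

/-!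
For `u ≤ 0` and `s ≥ 0` the denominator `D = 1 - (σ²u/(2b))(1 - e^{-bs})` of `ψ(s,u)` is at
least `1`, so `u ≤ ψ ≤ 0` and `|e^{zψ} - 1| ≤ (1 - u) min(z, 1)`. Since `∂ᵤψ = e^{-bs}/D²`,
the `u`-derivative of `e^{zψ} - 1` equals `a e^{-a} / (-u D)` with `a = -zψ`, hence lies
between `0` and `min(z, e^{-1}/(-u))`. For `u ≤ -e^{-1}` this is dominated by the
`ν`-integrable `min(z, 1)`, uniformly in `s`, so both integrals may be differentiated under
the integral sign; and since `e^{-1}/(-u) → 0`, dominated convergence, applied twice, gives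
`Δ_t'(u) → 0` as `u → -∞`.
-/

open MeasureTheory Filter Set
open scoped ENNReal

noncomputable def psi (b σ t u : ℝ) : ℝ :=
  u * Real.exp (-b * t) / (1 - σ ^ 2 * u / (2 * b) * (1 - Real.exp (-b * t)))

open Real Topology

noncomputable def psiDenom (b σ s u : ℝ) : ℝ :=
  1 - σ ^ 2 * u / (2 * b) * (1 - exp (-b * s))

noncomputable def deltaIntegrand (b σ s u z : ℝ) : ℝ :=
  exp (z * psi b σ s u) - 1

noncomputable def deltaIntegrandDeriv (b σ s u z : ℝ) : ℝ :=
  z * exp (-b * s) / psiDenom b σ s u ^ 2 * exp (z * u * exp (-b * s) / psiDenom b σ s u)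

lemma neg_exp_neg_one_nonpos : -exp (-1) ≤ (0 : ℝ) :=
  neg_nonpos.2 (exp_pos _).le

lemma abs_exp_sub_one_le_min {x : ℝ} (hx : x ≤ 0) : |exp x - 1| ≤ min (-x) 1 := by
  rw [abs_of_nonpos (by linarith [exp_le_one_iff.2 hx])]
  exact le_min (by linarith [add_one_le_exp x]) (by linarith [exp_pos x])

section Pointwise

variable {b σ s u : ℝ}

lemma psi_eq_div_psiDenom (b σ s u : ℝ) :
    psi b σ s u = u * exp (-b * s) / psiDenom b σ s u :=
  rfl

lemma exp_neg_mul_le_one (hb : 0 ≤ b) (hs : 0 ≤ s) : exp (-b * s) ≤ 1 :=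
  exp_le_one_iff.2 (by nlinarith)

lemma one_le_psiDenom (hb : 0 ≤ b) (hs : 0 ≤ s) (hu : u ≤ 0) : 1 ≤ psiDenom b σ s u := by
  have hE := exp_neg_mul_le_one hb hs
  have hc : σ ^ 2 * u / (2 * b) ≤ 0 :=
    div_nonpos_of_nonpos_of_nonneg (mul_nonpos_of_nonneg_of_nonpos (sq_nonneg σ) hu)
      (by positivity)
  unfold psiDenom
  nlinarith

lemma psiDenom_pos (hb : 0 ≤ b) (hs : 0 ≤ s) (hu : u ≤ 0) : 0 < psiDenom b σ s u :=
  one_pos.trans_le (one_le_psiDenom hb hs hu)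

lemma le_psi (hb : 0 ≤ b) (hs : 0 ≤ s) (hu : u ≤ 0) : u ≤ psi b σ s u := by
  have hD := one_le_psiDenom (σ := σ) hb hs hu
  have hE := exp_neg_mul_le_one hb hs
  rw [psi_eq_div_psiDenom, le_div_iff₀ (by linarith)]
  nlinarith [exp_pos (-b * s)]

lemma psi_nonpos (hb : 0 ≤ b) (hs : 0 ≤ s) (hu : u ≤ 0) : psi b σ s u ≤ 0 :=
  div_nonpos_of_nonpos_of_nonneg (mul_nonpos_of_nonpos_of_nonneg hu (exp_pos _).le)
    (psiDenom_pos hb hs hu).le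

lemma hasDerivAt_psi (h : psiDenom b σ s u ≠ 0) :
    HasDerivAt (psi b σ s) (exp (-b * s) / psiDenom b σ s u ^ 2) u := by
  set c := σ ^ 2 / (2 * b) * (1 - exp (-b * s))
  have hden : psiDenom b σ s = fun v => 1 - c * v := by
    funext v
    simp only [psiDenom, c]
    ring
  have hnum : HasDerivAt (fun v => v * exp (-b * s)) (exp (-b * s)) u := by
    simpa using (hasDerivAt_id u).mul_const (exp (-b * s))
  have hden' : HasDerivAt (psiDenom b σ s) (-(c * 1)) u := by
    rw [hden]
    exact ((hasDerivAt_id u).const_mul c).const_sub 1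
  refine (hnum.div hden' h).congr_deriv ?_
  simp only [hden]
  ring

lemma hasDerivAt_deltaIntegrand (z : ℝ) (h : psiDenom b σ s u ≠ 0) :
    HasDerivAt (fun v => deltaIntegrand b σ s v z) (deltaIntegrandDeriv b σ s u z) u := by
  refine ((((hasDerivAt_psi h).const_mul z).exp).sub_const 1).congr_deriv ?_
  rw [deltaIntegrandDeriv, psi_eq_div_psiDenom]
  ring_nf

lemma norm_deltaIntegrand_le (hb : 0 ≤ b) (hs : 0 ≤ s) (hu : u ≤ 0) {z : ℝ} (hz : 0 ≤ z) :
    ‖deltaIntegrand b σ s u z‖ ≤ (1 - u) * min z 1 := by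
  have hψ := le_psi (σ := σ) hb hs hu
  have hbound := abs_exp_sub_one_le_min
    (mul_nonpos_of_nonneg_of_nonpos hz (psi_nonpos (σ := σ) hb hs hu))
  rw [norm_eq_abs, deltaIntegrand]
  rcases le_total z 1 with hz1 | hz1
  · rw [min_eq_left hz1]
    nlinarith [min_le_left (-(z * psi b σ s u)) 1]
  · rw [min_eq_right hz1]
    linarith [min_le_right (-(z * psi b σ s u)) 1]

lemma deltaIntegrandDeriv_nonneg {z : ℝ} (hz : 0 ≤ z) :
    0 ≤ deltaIntegrandDeriv b σ s u z := by
  unfold deltaIntegrandDeriv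
  positivity

lemma deltaIntegrandDeriv_le_self (hb : 0 ≤ b) (hs : 0 ≤ s) (hu : u ≤ 0) {z : ℝ}
    (hz : 0 ≤ z) : deltaIntegrandDeriv b σ s u z ≤ z := by
  have hD := one_le_psiDenom (σ := σ) hb hs hu
  have hE := exp_neg_mul_le_one hb hs
  have hexp : exp (z * u * exp (-b * s) / psiDenom b σ s u) ≤ 1 :=
    exp_le_one_iff.2 (div_nonpos_of_nonpos_of_nonneg
      (mul_nonpos_of_nonpos_of_nonneg (mul_nonpos_of_nonneg_of_nonpos hz hu) (exp_pos _).le)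
      (by linarith))
  have hfrac : z * exp (-b * s) / psiDenom b σ s u ^ 2 ≤ z := by
    rw [div_le_iff₀ (by positivity)]
    exact mul_le_mul_of_nonneg_left (by nlinarith) hz
  calc deltaIntegrandDeriv b σ s u z
      ≤ z * exp (-b * s) / psiDenom b σ s u ^ 2 * 1 := by
        unfold deltaIntegrandDeriv
        gcongr
    _ ≤ z := by rwa [mul_one]

lemma deltaIntegrandDeriv_le_exp_neg_one_div (hb : 0 ≤ b) (hs : 0 ≤ s) (hu : u < 0) (z : ℝ) :
    deltaIntegrandDeriv b σ s u z ≤ exp (-1) / -u := by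
  have hD := one_le_psiDenom (σ := σ) hb hs hu.le
  have hu0 := hu.ne
  set D := psiDenom b σ s u
  set a := -(z * u * exp (-b * s) / D)
  have hrepr : deltaIntegrandDeriv b σ s u z = a * exp (-a) / (-u * D) := by
    simp only [deltaIntegrandDeriv, a, neg_neg, D]
    field_simp
  rw [hrepr]
  calc a * exp (-a) / (-u * D) ≤ exp (-1) / (-u * D) := by
        gcongr
        · nlinarith
        · exact mul_exp_neg_le_exp_neg_one a
    _ ≤ exp (-1) / -u := by
        gcongr
        · linarith
        · nlinarith

lemma norm_deltaIntegrandDeriv_le (hb : 0 ≤ b) (hs : 0 ≤ s) (hu : u ≤ -exp (-1)) {z : ℝ}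
    (hz : 0 ≤ z) : ‖deltaIntegrandDeriv b σ s u z‖ ≤ min z 1 := by
  have hu0 : u < 0 := hu.trans_lt (neg_neg_of_pos (exp_pos _))
  rw [norm_of_nonneg (deltaIntegrandDeriv_nonneg hz)]
  refine le_min (deltaIntegrandDeriv_le_self hb hs hu0.le hz) ?_
  calc deltaIntegrandDeriv b σ s u z ≤ exp (-1) / -u :=
        deltaIntegrandDeriv_le_exp_neg_one_div hb hs hu0 z
    _ ≤ 1 := (div_le_one (by linarith)).2 (by linarith)

lemma tendsto_deltaIntegrandDeriv_atBot (hb : 0 ≤ b) (hs : 0 ≤ s) {z : ℝ} (hz : 0 ≤ z) :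
    Tendsto (fun u => deltaIntegrandDeriv b σ s u z) atBot (𝓝 0) := by
  have hlim : Tendsto (fun u : ℝ => exp (-1) / -u) atBot (𝓝 0) :=
    tendsto_const_nhds.div_atTop tendsto_neg_atBot_atTop
  refine tendsto_of_tendsto_of_tendsto_of_le_of_le' tendsto_const_nhds hlim
    (Eventually.of_forall fun u => deltaIntegrandDeriv_nonneg hz) ?_
  filter_upwards [eventually_lt_atBot 0] with u hu
  exact deltaIntegrandDeriv_le_exp_neg_one_div hb hs hu z

lemma continuous_deltaIntegrand : Continuous (deltaIntegrand b σ s u) := by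
  unfold deltaIntegrand
  fun_prop

lemma continuous_deltaIntegrandDeriv : Continuous (deltaIntegrandDeriv b σ s u) := by
  unfold deltaIntegrandDeriv
  fun_prop

@[fun_prop]
lemma continuous_psiDenom (b σ u : ℝ) : Continuous fun s => psiDenom b σ s u := by
  unfold psiDenom
  fun_prop

lemma continuousOn_deltaIntegrand (hb : 0 ≤ b) (hu : u ≤ 0) (z : ℝ) :
    ContinuousOn (fun s => deltaIntegrand b σ s u z) (Ici 0) := by
  simp only [deltaIntegrand, psi_eq_div_psiDenom]
  fun_prop (disch := exact fun s hs => (psiDenom_pos hb hs hu).ne')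

lemma continuousOn_deltaIntegrandDeriv (hb : 0 ≤ b) (hu : u ≤ 0) (z : ℝ) :
    ContinuousOn (fun s => deltaIntegrandDeriv b σ s u z) (Ici 0) := by
  have hD : ∀ s ∈ Ici (0 : ℝ), psiDenom b σ s u ≠ 0 :=
    fun s hs => (psiDenom_pos hb hs hu).ne'
  have hD' := (continuous_psiDenom b σ u).continuousOn (s := Ici 0)
  have hE : ContinuousOn (fun s => z * exp (-b * s)) (Ici 0) := by fun_prop
  have hE' : ContinuousOn (fun s => z * u * exp (-b * s)) (Ici 0) := by fun_prop
  exact (hE.div (hD'.pow 2) fun s hs => pow_ne_zero 2 (hD s hs)).mul (hE'.div hD' hD).rexp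

end Pointwise

section Integral

variable {b σ : ℝ} {μ : Measure ℝ}

lemma integrable_min_one_of_lintegral_lt_top (hμ : ∀ᵐ z ∂μ, 0 ≤ z)
    (h : ∫⁻ z, ENNReal.ofReal (min z 1) ∂μ < ∞) : Integrable (fun z => min z 1) μ :=
  ⟨(continuous_id.min continuous_const).aestronglyMeasurable,
    (hasFiniteIntegral_iff_ofReal (hμ.mono fun _ hz => le_min hz zero_le_one)).2 h⟩

variable (hb : 0 ≤ b) (hμ : ∀ᵐ z ∂μ, 0 ≤ z) (hint : Integrable (fun z => min z 1) μ)
include hb hμ hint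

lemma integrable_deltaIntegrand {s u : ℝ} (hs : 0 ≤ s) (hu : u ≤ 0) :
    Integrable (deltaIntegrand b σ s u) μ :=
  (hint.const_mul (1 - u)).mono' continuous_deltaIntegrand.aestronglyMeasurable
    (hμ.mono fun _ hz => norm_deltaIntegrand_le hb hs hu hz)

lemma norm_integral_deltaIntegrandDeriv_le {s u : ℝ} (hs : 0 ≤ s) (hu : u ≤ -exp (-1)) :
    ‖∫ z, deltaIntegrandDeriv b σ s u z ∂μ‖ ≤ ∫ z, min z 1 ∂μ :=
  norm_integral_le_of_norm_le hint (hμ.mono fun _ hz => norm_deltaIntegrandDeriv_le hb hs hu hz)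

-- Continuity in `s` on `[0, ∞)`, where `psiDenom ≥ 1`, is what makes the inner integrals
-- measurable as functions of `s`.
lemma continuousOn_integral_deltaIntegrand {u : ℝ} (hu : u ≤ 0) :
    ContinuousOn (fun s => ∫ z, deltaIntegrand b σ s u z ∂μ) (Ici 0) :=
  continuousOn_of_dominated (fun _ _ => continuous_deltaIntegrand.aestronglyMeasurable)
    (fun _ hs => hμ.mono fun _ hz => norm_deltaIntegrand_le hb hs hu hz) (hint.const_mul (1 - u))
    (Eventually.of_forall (continuousOn_deltaIntegrand hb hu))

lemma continuousOn_integral_deltaIntegrandDeriv {u : ℝ} (hu : u ≤ -exp (-1)) :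
    ContinuousOn (fun s => ∫ z, deltaIntegrandDeriv b σ s u z ∂μ) (Ici 0) :=
  continuousOn_of_dominated (fun _ _ => continuous_deltaIntegrandDeriv.aestronglyMeasurable)
    (fun _ hs => hμ.mono fun _ hz => norm_deltaIntegrandDeriv_le hb hs hu hz) hint
    (Eventually.of_forall
      (continuousOn_deltaIntegrandDeriv hb (hu.trans neg_exp_neg_one_nonpos)))

lemma hasDerivAt_integral_deltaIntegrand {s u : ℝ} (hs : 0 ≤ s) (hu : u < -exp (-1)) :
    HasDerivAt (fun v => ∫ z, deltaIntegrand b σ s v z ∂μ)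
      (∫ z, deltaIntegrandDeriv b σ s u z ∂μ) u :=
  (hasDerivAt_integral_of_dominated_loc_of_deriv_le (F := fun v z => deltaIntegrand b σ s v z)
    (F' := fun v z => deltaIntegrandDeriv b σ s v z) (Iio_mem_nhds hu)
    (Eventually.of_forall fun _ => continuous_deltaIntegrand.aestronglyMeasurable)
    (integrable_deltaIntegrand hb hμ hint hs (hu.le.trans neg_exp_neg_one_nonpos))
    continuous_deltaIntegrandDeriv.aestronglyMeasurable
    (hμ.mono fun _ hz _ hv => norm_deltaIntegrandDeriv_le hb hs (le_of_lt hv) hz) hint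
    (Eventually.of_forall fun z _ hv => hasDerivAt_deltaIntegrand z
      (psiDenom_pos hb hs ((le_of_lt hv).trans neg_exp_neg_one_nonpos)).ne')).2

lemma tendsto_integral_deltaIntegrandDeriv_atBot {s : ℝ} (hs : 0 ≤ s) :
    Tendsto (fun u => ∫ z, deltaIntegrandDeriv b σ s u z ∂μ) atBot (𝓝 0) := by
  simpa using tendsto_integral_filter_of_dominated_convergence _
    (Eventually.of_forall fun _ => continuous_deltaIntegrandDeriv.aestronglyMeasurable)
    ((eventually_le_atBot (-exp (-1))).mono fun u hu =>
      hμ.mono fun _ hz => norm_deltaIntegrandDeriv_le (σ := σ) hb hs hu hz)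
    hint (hμ.mono fun _ hz => tendsto_deltaIntegrandDeriv_atBot hb hs hz)

variable (t : ℝ)

lemma hasDerivAt_integral_integral_deltaIntegrand {u : ℝ} (hu : u < -exp (-1)) :
    HasDerivAt (fun v => ∫ s in Ioc 0 t, ∫ z, deltaIntegrand b σ s v z ∂μ)
      (∫ s in Ioc 0 t, ∫ z, deltaIntegrandDeriv b σ s u z ∂μ) u := by
  have hIoc : Ioc 0 t ⊆ Ici 0 := Ioc_subset_Icc_self.trans Icc_subset_Ici_self
  refine (hasDerivAt_integral_of_dominated_loc_of_deriv_le (μ := volume.restrict (Ioc 0 t))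
    (F := fun v s => ∫ z, deltaIntegrand b σ s v z ∂μ)
    (F' := fun v s => ∫ z, deltaIntegrandDeriv b σ s v z ∂μ)
    (bound := fun _ => ∫ z, min z 1 ∂μ)
    (Iio_mem_nhds hu) ?_ ?_ ?_ ?_ (integrableOn_const measure_Ioc_lt_top.ne) ?_).2
  · filter_upwards [Iio_mem_nhds hu] with v hv
    exact ((continuousOn_integral_deltaIntegrand hb hμ hint
      (hv.le.trans neg_exp_neg_one_nonpos)).mono hIoc).aestronglyMeasurable measurableSet_Ioc
  · exact ((continuousOn_integral_deltaIntegrand hb hμ hint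
      (hu.le.trans neg_exp_neg_one_nonpos)).mono Icc_subset_Ici_self).integrableOn_Icc.mono_set
      Ioc_subset_Icc_self
  · exact ((continuousOn_integral_deltaIntegrandDeriv hb hμ hint hu.le).mono hIoc)
      |>.aestronglyMeasurable measurableSet_Ioc
  · filter_upwards [ae_restrict_mem measurableSet_Ioc] with s hs v hv
    exact norm_integral_deltaIntegrandDeriv_le hb hμ hint hs.1.le (le_of_lt hv)
  · filter_upwards [ae_restrict_mem measurableSet_Ioc] with s hs v hv
    exact hasDerivAt_integral_deltaIntegrand hb hμ hint hs.1.le hv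

lemma tendsto_integral_integral_deltaIntegrandDeriv_atBot :
    Tendsto (fun u => ∫ s in Ioc 0 t, ∫ z, deltaIntegrandDeriv b σ s u z ∂μ) atBot (𝓝 0) := by
  have hIoc : Ioc 0 t ⊆ Ici 0 := Ioc_subset_Icc_self.trans Icc_subset_Ici_self
  simpa using tendsto_integral_filter_of_dominated_convergence (μ := volume.restrict (Ioc 0 t))
    (F := fun u s => ∫ z, deltaIntegrandDeriv b σ s u z ∂μ) (fun _ => ∫ z, min z 1 ∂μ)
    ((eventually_le_atBot (-exp (-1))).mono fun u hu =>
      ((continuousOn_integral_deltaIntegrandDeriv hb hμ hint hu).mono hIoc).aestronglyMeasurable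
        measurableSet_Ioc)
    ((eventually_le_atBot (-exp (-1))).mono fun u hu =>
      (ae_restrict_mem measurableSet_Ioc).mono fun s hs =>
        norm_integral_deltaIntegrandDeriv_le hb hμ hint hs.1.le hu)
    (integrableOn_const measure_Ioc_lt_top.ne)
    ((ae_restrict_mem measurableSet_Ioc).mono fun s hs =>
      tendsto_integral_deltaIntegrandDeriv_atBot hb hμ hint hs.1.le)

end Integral

theorem Delta_hasDerivAt_and_deriv_tendsto_zero_general (b σ t : ℝ) (hb : 0 < b)
    (ν : Measure ℝ)
    (hν : ∫⁻ z in Set.Ioi (0 : ℝ), ENNReal.ofReal (min z 1) ∂ν < ⊤) :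
    (∀ u : ℝ, u ≤ -1 →
      HasDerivAt
        (fun v : ℝ => ∫ s in Set.Ioc (0 : ℝ) t,
          ∫ z in Set.Ioi (0 : ℝ), (Real.exp (z * psi b σ s v) - 1) ∂ν)
        (∫ s in Set.Ioc (0 : ℝ) t,
          ∫ z in Set.Ioi (0 : ℝ),
            z * Real.exp (-b * s) / (1 - σ ^ 2 * u / (2 * b) * (1 - Real.exp (-b * s))) ^ 2 *
              Real.exp (z * u * Real.exp (-b * s) /
                (1 - σ ^ 2 * u / (2 * b) * (1 - Real.exp (-b * s)))) ∂ν)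
        u) ∧
      Filter.Tendsto
        (fun u : ℝ => ∫ s in Set.Ioc (0 : ℝ) t,
          ∫ z in Set.Ioi (0 : ℝ),
            z * Real.exp (-b * s) / (1 - σ ^ 2 * u / (2 * b) * (1 - Real.exp (-b * s))) ^ 2 *
              Real.exp (z * u * Real.exp (-b * s) /
                (1 - σ ^ 2 * u / (2 * b) * (1 - Real.exp (-b * s)))) ∂ν)
        Filter.atBot (nhds 0) := by
  have hpos : ∀ᵐ z ∂ν.restrict (Ioi 0), 0 ≤ z :=
    (ae_restrict_mem measurableSet_Ioi).mono fun _ hz => le_of_lt hz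
  have hint := integrable_min_one_of_lintegral_lt_top hpos hν
  have hexp : -1 < -exp (-1) := neg_lt_neg (exp_lt_one_iff.2 (by norm_num))
  exact ⟨fun u hu => hasDerivAt_integral_integral_deltaIntegrand hb.le hpos hint t
      (hu.trans_lt hexp),
    tendsto_integral_integral_deltaIntegrandDeriv_atBot hb.le hpos hint t⟩

theorem Delta_hasDerivAt_and_deriv_tendsto_zero (b σ t : ℝ) (hb : 0 < b) (hσ : 0 < σ)
    (ht : 0 < t)
    (ν : Measure ℝ) (hνsupp : ν (Set.Iic 0) = 0)
    (hν : ∫⁻ z in Set.Ioi (0 : ℝ), ENNReal.ofReal (min z 1) ∂ν < ⊤) :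
    (∀ u : ℝ, u ≤ -1 →
      HasDerivAt
        (fun v : ℝ => ∫ s in Set.Ioc (0 : ℝ) t,
          ∫ z in Set.Ioi (0 : ℝ), (Real.exp (z * psi b σ s v) - 1) ∂ν)
        (∫ s in Set.Ioc (0 : ℝ) t,
          ∫ z in Set.Ioi (0 : ℝ),
            z * Real.exp (-b * s) / (1 - σ ^ 2 * u / (2 * b) * (1 - Real.exp (-b * s))) ^ 2 *
              Real.exp (z * u * Real.exp (-b * s) /
                (1 - σ ^ 2 * u / (2 * b) * (1 - Real.exp (-b * s)))) ∂ν)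
        u) ∧
      Filter.Tendsto
        (fun u : ℝ => ∫ s in Set.Ioc (0 : ℝ) t,
          ∫ z in Set.Ioi (0 : ℝ),
            z * Real.exp (-b * s) / (1 - σ ^ 2 * u / (2 * b) * (1 - Real.exp (-b * s))) ^ 2 *
              Real.exp (z * u * Real.exp (-b * s) /
                (1 - σ ^ 2 * u / (2 * b) * (1 - Real.exp (-b * s)))) ∂ν)
        Filter.atBot (nhds 0) :=
  Delta_hasDerivAt_and_deriv_tendsto_zero_general b σ t hb ν hν
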